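/- The serial dictatorship rule is resource monotonic: if an agent a* changes her preference from P_{a*} to P'_{a*} and under the new profile SD assigns a* the null object, then every other agent receives a weakly preferred assignment under the new profile compared to the original profile. -/

import Mathlib

variable {O : Type*} [Fintype O] [DecidableEq O]

/-- Available objects when it is agent `k`'s turn in the serial dictatorship with
priority order `a_0, a_1, …`: each agent in turn takes her most-preferred available
object; the null object is never removed (it has unlimited copies).
(Larger in the linear order means more preferred.) -/
def availSD (nullObj : O) {n : ℕ} (P : Fin n → LinearOrder O) :
    ℕ → {s : Finset O // s.Nonempty}
  | 0 => ⟨Finset.univ, ⟨nullObj, Finset.mem_univ _⟩⟩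
  | k + 1 =>
    let s := availSD nullObj P k
    if h : k < n then
      ⟨insert nullObj (s.1.erase (@Finset.max' O (P ⟨k, h⟩) s.1 s.2)),
        Finset.insert_nonempty _ _⟩
    else s

/-- The serial dictatorship rule: agent `a` receives her most-preferred object
among those still available at her turn. -/
def SD (nullObj : O) {n : ℕ} (P : Fin n → LinearOrder O) (a : Fin n) : O :=
  @Finset.max' O (P a) (availSD nullObj P a.1).1 (availSD nullObj P a.1).2

/-!
Up to the turn of `a*` both runs of the dictatorship see the same preferences, so the sets of
available objects agree. At her turn `a*` takes the null object under the new profile, so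
afterwards the new run has at least the objects available in the old one. Removing each
dictator's favourite object preserves this inclusion, and a larger menu can only give an agent
a better favourite.
-/

omit [Fintype O] in
theorem Finset.erase_max'_subset_erase_max' (L : LinearOrder O) {s t : Finset O}
    (hs : s.Nonempty) (ht : t.Nonempty) (hst : s ⊆ t) :
    s.erase (@Finset.max' O L s hs) ⊆ t.erase (@Finset.max' O L t ht) := by
  let := L
  intro y hy
  obtain ⟨hne, hys⟩ := Finset.mem_erase.mp hy
  refine Finset.mem_erase.mpr ⟨fun hyt => hne ?_, hst hys⟩
  rw [hyt] at hys ⊢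
  exact le_antisymm (Finset.le_max' s _ hys) (Finset.max'_subset hs hst)

section SerialDictatorship

variable (nullObj : O) {n : ℕ}

theorem availSD_succ_of_lt (P : Fin n → LinearOrder O) {k : ℕ} (hk : k < n) :
    (availSD nullObj P (k + 1)).1 =
      insert nullObj ((availSD nullObj P k).1.erase (SD nullObj P ⟨k, hk⟩)) := by
  rw [availSD, dif_pos hk]
  rfl

theorem availSD_succ_of_le (P : Fin n → LinearOrder O) {k : ℕ} (hk : n ≤ k) :
    availSD nullObj P (k + 1) = availSD nullObj P k := by
  rw [availSD, dif_neg hk.not_gt]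

theorem null_mem_availSD (P : Fin n → LinearOrder O) (k : ℕ) :
    nullObj ∈ (availSD nullObj P k).1 := by
  cases k with
  | zero => exact Finset.mem_univ _
  | succ k =>
    by_cases hk : k < n
    · rw [availSD_succ_of_lt nullObj P hk]
      exact Finset.mem_insert_self _ _
    · rw [availSD_succ_of_le nullObj P (not_lt.mp hk)]
      exact null_mem_availSD P k

theorem availSD_succ_subset (P : Fin n → LinearOrder O) (k : ℕ) :
    (availSD nullObj P (k + 1)).1 ⊆ (availSD nullObj P k).1 := by
  by_cases hk : k < n
  · rw [availSD_succ_of_lt nullObj P hk]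
    exact Finset.insert_subset (null_mem_availSD nullObj P k) (Finset.erase_subset _ _)
  · rw [availSD_succ_of_le nullObj P (not_lt.mp hk)]

theorem availSD_succ_of_SD_eq_null (P : Fin n → LinearOrder O) (a : Fin n)
    (h : SD nullObj P a = nullObj) :
    (availSD nullObj P (a.1 + 1)).1 = (availSD nullObj P a.1).1 := by
  rw [availSD_succ_of_lt nullObj P a.2, Fin.eta, h]
  exact Finset.insert_erase (null_mem_availSD nullObj P a.1)

theorem availSD_subset_availSD {P P' : Fin n → LinearOrder O} {k m : ℕ} (hkm : k ≤ m)
    (hk : (availSD nullObj P k).1 ⊆ (availSD nullObj P' k).1)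
    (hP : ∀ i : Fin n, k ≤ i.1 → i.1 < m → P i = P' i) :
    (availSD nullObj P m).1 ⊆ (availSD nullObj P' m).1 := by
  induction m, hkm using Nat.le_induction with
  | base => exact hk
  | succ m hkm ih =>
    have ih := ih fun i hki him => hP i hki (by omega)
    by_cases hm : m < n
    · rw [availSD_succ_of_lt nullObj P hm, availSD_succ_of_lt nullObj P' hm, SD, SD,
        hP ⟨m, hm⟩ hkm m.lt_succ_self]
      exact Finset.insert_subset_insert _ (Finset.erase_max'_subset_erase_max' _ _ _ ih)
    · rw [availSD_succ_of_le nullObj P (not_lt.mp hm),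
        availSD_succ_of_le nullObj P' (not_lt.mp hm)]
      exact ih

theorem SD_le_SD_of_availSD_subset {P P' : Fin n → LinearOrder O} {a : Fin n}
    (hP : P' a = P a) (h : (availSD nullObj P a.1).1 ⊆ (availSD nullObj P' a.1).1) :
    (P a).le (SD nullObj P a) (SD nullObj P' a) := by
  rw [SD, SD, hP]
  exact @Finset.max'_subset O (P a) _ _ _ h

end SerialDictatorship

/-- Serial dictatorship is resource monotonic: if agent `a*` changes her
preference from `P a*` to `Q` and is assigned the null object under the new
profile, then every other agent receives a weakly preferred assignment under
the new profile. -/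
theorem sd_resourceMonotonic (nullObj : O) {n : ℕ} (P : Fin n → LinearOrder O)
    (astar : Fin n) (Q : LinearOrder O)
    (h : SD nullObj (Function.update P astar Q) astar = nullObj) :
    ∀ a : Fin n, a ≠ astar →
      (P a).le (SD nullObj P a) (SD nullObj (Function.update P astar Q) a) := by
  intro a ha
  set P' := Function.update P astar Q
  have agree : ∀ i : Fin n, i ≠ astar → P i = P' i := fun i hi =>
    (Function.update_of_ne hi Q P).symm
  have before : ∀ m ≤ astar.1, (availSD nullObj P m).1 ⊆ (availSD nullObj P' m).1 :=
    fun m hm => availSD_subset_availSD nullObj m.zero_le subset_rfl fun i _ him =>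
      agree i (Fin.ne_of_lt (by omega))
  refine SD_le_SD_of_availSD_subset nullObj (agree a ha).symm ?_
  rcases lt_or_gt_of_ne (Fin.val_ne_of_ne ha) with hlt | hgt
  · exact before a.1 hlt.le
  · have after : (availSD nullObj P (astar.1 + 1)).1 ⊆ (availSD nullObj P' (astar.1 + 1)).1 :=
      calc (availSD nullObj P (astar.1 + 1)).1
          ⊆ (availSD nullObj P astar.1).1 := availSD_succ_subset nullObj P _
        _ ⊆ (availSD nullObj P' astar.1).1 := before _ le_rfl
        _ = (availSD nullObj P' (astar.1 + 1)).1 :=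
            (availSD_succ_of_SD_eq_null nullObj P' astar h).symm
    exact availSD_subset_availSD nullObj hgt after fun i hi _ =>
      agree i (Fin.ne_of_gt (by omega))
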